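/- arXiv:2511.07054 — 2 statements merged into one kernel-verified Lean document; each statement's English description precedes it below -/
import Mathlib

section
/- Let s be an n×n sign pattern with leader node 1 whose pattern digraph is a directed tree rooted at node 1: for every node j ≠ 1 there is exactly one walk from node 1 to j (say of length p_j ≥ 1, with walk sign σ_j equal to the product of the edge signs along it), and there is no walk of positive length from node 1 to itself. Suppose there exist nodes j ≠ k with equal depths p_j = p_k but opposite walk signs σ_j = −σ_k (a layer dilation). Then the pattern is not structurally sign herdable: for every realization A of s, every b ≠ 0, and every δ ∈ ℝⁿ, the vector 𝒞(A, b·e₁)δ is not entrywise strictly positive. -/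
/-- A walk of length `m` from node `i` to node `j` in the pattern digraph of
the sign pattern `s`. -/
def isWalk (n : ℕ) (s : Matrix (Fin n) (Fin n) ℝ) (m : ℕ) (v : ℕ → Fin n)
    (i j : Fin n) : Prop :=
  v 0 = i ∧ v m = j ∧ ∀ t, t < m → s (v (t + 1)) (v t) ≠ 0

/-- The sign of a length-`m` walk `v`: the product of the edge signs along it. -/
def walkSign (n : ℕ) (s : Matrix (Fin n) (Fin n) ℝ) (m : ℕ) (v : ℕ → Fin n) : ℝ :=
  ∏ t ∈ Finset.range m, s (v (t + 1)) (v t)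

/-- The controllability matrix `𝒞(A,B) = [B | AB | ⋯ | A^{n−1}B]`. -/
def ctrbMatrix (n : ℕ) (A : Matrix (Fin n) (Fin n) ℝ) (B : Fin n → ℝ) :
    Matrix (Fin n) (Fin n) ℝ :=
  fun i k => (A ^ (k : ℕ)).mulVec B i

/-!
In a directed tree the leader reaches each node `q` by exactly one walk, so `(Aᵐ b e₁)_q` vanishes
unless `m` is the depth `p_q`, and then equals `b` times the product of the entries of `A` along
that walk, of sign `sign b · σ_q`. Row `q` of `𝒞 δ` is therefore `(A^{p_q} b e₁)_q · δ_{p_q}`. Two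
nodes of the same depth share the factor `δ_{p_q}`, while a layer dilation gives their first factors
opposite signs, so the two rows cannot both be positive.
-/

open Matrix

theorem Real.sign_eq_coe_sign (r : ℝ) : Real.sign r = (SignType.sign r : ℝ) := by
  rcases lt_trichotomy r 0 with h | rfl | h
  · simp [Real.sign_of_neg h, h]
  · simp
  · simp [Real.sign_of_pos h, h]

theorem Real.sign_mul (x y : ℝ) : Real.sign (x * y) = Real.sign x * Real.sign y := by
  simp only [Real.sign_eq_coe_sign, _root_.sign_mul, SignType.coe_mul]

theorem Real.sign_prod {ι : Type*} (s : Finset ι) (f : ι → ℝ) :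
    Real.sign (∏ i ∈ s, f i) = ∏ i ∈ s, Real.sign (f i) := by
  simp only [Real.sign_eq_coe_sign]
  exact map_prod (SignType.castHom.comp signHom) f s

theorem Real.mul_neg_of_sign_eq_neg {x y : ℝ} (hx : x ≠ 0)
    (h : Real.sign y = -Real.sign x) : x * y < 0 := by
  have hsq : Real.sign x * Real.sign x = 1 := by
    rcases Real.sign_apply_eq_of_ne_zero x hx with h | h <;> rw [h] <;> norm_num
  have hxy : Real.sign (x * y) = -1 := by
    rw [Real.sign_mul, h]
    linear_combination -hsq
  have hne : x * y ≠ 0 := fun h0 => by simp [h0] at hxy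
  have hpos := Real.sign_mul_pos_of_ne_zero _ hne
  rw [hxy] at hpos
  linarith

section Walks

variable {n : ℕ}

theorem walkSign_map_sign {A s : Matrix (Fin n) (Fin n) ℝ}
    (hsA : ∀ i l, Real.sign (A i l) = s i l) (m : ℕ) (v : ℕ → Fin n) :
    Real.sign (walkSign n A m v) = walkSign n s m v := by
  simp only [walkSign, Real.sign_prod, hsA]

theorem walkSign_update_succ (s : Matrix (Fin n) (Fin n) ℝ) (m : ℕ) (v : ℕ → Fin n)
    (i : Fin n) :
    walkSign n s (m + 1) (Function.update v (m + 1) i) = walkSign n s m v * s i (v m) := by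
  rw [walkSign, Finset.prod_range_succ, walkSign]
  congr 1
  · refine Finset.prod_congr rfl fun t ht => ?_
    have ht : t < m := Finset.mem_range.mp ht
    rw [Function.update_of_ne (by omega), Function.update_of_ne (by omega)]
  · rw [Function.update_self, Function.update_of_ne (by omega)]

theorem isWalk.update_succ {s : Matrix (Fin n) (Fin n) ℝ} {m : ℕ} {v : ℕ → Fin n}
    {r l i : Fin n} (hv : isWalk n s m v r l) (hil : s i l ≠ 0) :
    isWalk n s (m + 1) (Function.update v (m + 1) i) r i := by
  obtain ⟨h0, hm, hstep⟩ := hv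
  refine ⟨by rw [Function.update_of_ne (by omega), h0], Function.update_self .., fun t ht => ?_⟩
  rw [Function.update_of_ne (by omega : t ≠ m + 1)]
  rcases Nat.lt_succ_iff_lt_or_eq.mp ht with ht | rfl
  · rw [Function.update_of_ne (by omega)]
    exact hstep t ht
  · rwa [Function.update_self, hm]

def UniqueWalksFrom (s : Matrix (Fin n) (Fin n) ℝ) (r : Fin n) : Prop :=
  ∀ i m m' (v v' : ℕ → Fin n), isWalk n s m v r i → isWalk n s m' v' r i →
    m = m' ∧ ∀ t, t ≤ m → v t = v' t

theorem uniqueWalksFrom_of_forall_ne {s : Matrix (Fin n) (Fin n) ℝ} {r : Fin n}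
    (huniq : ∀ j, j ≠ r → ∀ (m m' : ℕ) (v v' : ℕ → Fin n),
      isWalk n s m v r j → isWalk n s m' v' r j → m = m' ∧ ∀ t, t ≤ m → v t = v' t)
    (hroot : ∀ m : ℕ, 0 < m → ¬ ∃ v : ℕ → Fin n, isWalk n s m v r r) :
    UniqueWalksFrom s r := by
  intro i m m' v v' hv hv'
  by_cases hi : i = r
  · subst hi
    have hlen : ∀ {m} {v : ℕ → Fin n}, isWalk n s m v i i → m = 0 := fun {m v} hv =>
      Nat.eq_zero_of_not_pos fun hm => hroot m hm ⟨v, hv⟩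
    obtain rfl := hlen hv
    obtain rfl := hlen hv'
    exact ⟨rfl, fun t ht => by rw [Nat.le_zero.mp ht, hv.1, hv'.1]⟩
  · exact huniq i hi m m' v v' hv hv'

end Walks

section Propagation

variable {n : ℕ} {A s : Matrix (Fin n) (Fin n) ℝ} {r : Fin n} {B : Fin n → ℝ}

/-- On a digraph with unique walks from `r`, each entry of `A ^ m *ᵥ B` is a single walk product,
because the expansion `(A ^ (m + 1) *ᵥ B) i = ∑ l, A i l * (A ^ m *ᵥ B) l` has at most one nonzero
term: that of the penultimate vertex of the unique walk to `i`. -/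
theorem UniqueWalksFrom.exists_pow_mulVec_eq_mul_walkSign (huw : UniqueWalksFrom s r)
    (hsupp : ∀ i l, A i l ≠ 0 → s i l ≠ 0) (hB : ∀ l, l ≠ r → B l = 0) (m : ℕ) (i : Fin n)
    (hi : (A ^ m *ᵥ B) i ≠ 0) :
    ∃ v, isWalk n s m v r i ∧ (A ^ m *ᵥ B) i = B r * walkSign n A m v := by
  induction m generalizing i with
  | zero =>
    rw [pow_zero, Matrix.one_mulVec] at hi ⊢
    obtain rfl : i = r := by_contra fun h => hi (hB i h)
    exact ⟨fun _ => i, ⟨rfl, rfl, fun t ht => absurd ht t.not_lt_zero⟩, by simp [walkSign]⟩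
  | succ m ih =>
    have hexpand : (A ^ (m + 1) *ᵥ B) i = ∑ l, A i l * (A ^ m *ᵥ B) l := by
      rw [pow_succ', ← Matrix.mulVec_mulVec]
      rfl
    have hterm : ∀ l, A i l * (A ^ m *ᵥ B) l ≠ 0 → ∃ v, isWalk n s m v r l ∧
        isWalk n s (m + 1) (Function.update v (m + 1) i) r i ∧
        A i l * (A ^ m *ᵥ B) l = B r * walkSign n A (m + 1) (Function.update v (m + 1) i) := by
      intro l hl
      obtain ⟨v, hv, hval⟩ := ih l (right_ne_zero_of_mul hl)
      refine ⟨v, hv, hv.update_succ (hsupp i l (left_ne_zero_of_mul hl)), ?_⟩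
      rw [walkSign_update_succ, hv.2.1, hval]
      ring
    rw [hexpand] at hi ⊢
    obtain ⟨l₀, -, hl₀⟩ := Finset.exists_ne_zero_of_sum_ne_zero hi
    obtain ⟨v₀, hv₀, hw₀, hval₀⟩ := hterm l₀ hl₀
    have honly : ∀ l, l ≠ l₀ → A i l * (A ^ m *ᵥ B) l = 0 := by
      intro l hne
      by_contra hl
      obtain ⟨v, hv, hw, -⟩ := hterm l hl
      have hpen := (huw i _ _ _ _ hw hw₀).2 m m.le_succ
      simp only [Function.update_of_ne (Nat.succ_ne_self m).symm, hv.2.1, hv₀.2.1] at hpen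
      exact hne hpen
    exact ⟨_, hw₀, by rw [Finset.sum_eq_single l₀ (fun l _ => honly l) (by simp), hval₀]⟩

theorem ctrbMatrix_mulVec_apply_eq_of_pow_mulVec_eq_zero (A : Matrix (Fin n) (Fin n) ℝ)
    (B δ : Fin n → ℝ) {q : Fin n} {d : ℕ} (h : ∀ m, m ≠ d → (A ^ m *ᵥ B) q = 0) :
    (ctrbMatrix n A B *ᵥ δ) q = (A ^ d *ᵥ B) q * (if hd : d < n then δ ⟨d, hd⟩ else 0) := by
  have hsum : (ctrbMatrix n A B *ᵥ δ) q = ∑ κ : Fin n, (A ^ (κ : ℕ) *ᵥ B) q * δ κ := rfl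
  rw [hsum]
  split_ifs with hd
  · refine Finset.sum_eq_single (⟨d, hd⟩ : Fin n) (fun κ _ hκ => ?_) (by simp)
    rw [h κ (fun hκd => hκ (Fin.ext hκd)), zero_mul]
  · rw [mul_zero]
    exact Finset.sum_eq_zero fun κ _ => by rw [h κ (by omega), zero_mul]

end Propagation

theorem tree_layer_dilation_not_SS_herdable_general
    (n : ℕ) (hn : 0 < n) (s : Matrix (Fin n) (Fin n) ℝ)
    (p : Fin n → ℕ) (σ : Fin n → ℝ)
    (hall : ∀ j, j ≠ ⟨0, hn⟩ → ∀ (m : ℕ) (v : ℕ → Fin n),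
      isWalk n s m v ⟨0, hn⟩ j → m = p j ∧ walkSign n s m v = σ j)
    (huniq : ∀ j, j ≠ ⟨0, hn⟩ → ∀ (m m' : ℕ) (v v' : ℕ → Fin n),
      isWalk n s m v ⟨0, hn⟩ j → isWalk n s m' v' ⟨0, hn⟩ j →
      m = m' ∧ ∀ t, t ≤ m → v t = v' t)
    (hroot : ∀ m : ℕ, 0 < m →
      ¬ ∃ v : ℕ → Fin n, isWalk n s m v ⟨0, hn⟩ ⟨0, hn⟩)
    (j k : Fin n) (hj : j ≠ ⟨0, hn⟩) (hk : k ≠ ⟨0, hn⟩)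
    (hdepth : p j = p k) (hdil : σ j = -σ k) :
    ∀ A : Matrix (Fin n) (Fin n) ℝ, (∀ i l, Real.sign (A i l) = s i l) →
      ∀ b : ℝ, b ≠ 0 → ∀ δ : Fin n → ℝ,
        ¬ ∀ i, 0 <
          (ctrbMatrix n A (fun l => if l = ⟨0, hn⟩ then b else 0)).mulVec δ i := by
  intro A hsA b _ δ hpos
  set r : Fin n := ⟨0, hn⟩
  set B : Fin n → ℝ := fun l => if l = r then b else 0
  have hsupp : ∀ i l, A i l ≠ 0 → s i l ≠ 0 := fun i l h =>
    hsA i l ▸ Real.sign_eq_zero_iff.not.mpr h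
  have hnode : ∀ q, q ≠ r → ∀ m, (A ^ m *ᵥ B) q ≠ 0 →
      m = p q ∧ Real.sign ((A ^ m *ᵥ B) q) = Real.sign b * σ q := by
    intro q hq m hm
    obtain ⟨v, hv, hval⟩ := (uniqueWalksFrom_of_forall_ne huniq hroot)
      |>.exists_pow_mulVec_eq_mul_walkSign hsupp (fun l hl => if_neg hl) m q hm
    obtain ⟨hlen, hsign⟩ := hall q hq m v hv
    rw [hval, Real.sign_mul, walkSign_map_sign hsA, hsign, if_pos rfl]
    exact ⟨hlen, rfl⟩
  have hrow : ∀ q, q ≠ r → (ctrbMatrix n A B *ᵥ δ) q =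
      (A ^ p q *ᵥ B) q * (if hd : p q < n then δ ⟨p q, hd⟩ else 0) := fun q hq =>
    ctrbMatrix_mulVec_apply_eq_of_pow_mulVec_eq_zero A B δ fun m hm =>
      by_contra fun h => hm (hnode q hq m h).1
  have hposj := hpos j
  have hposk := hpos k
  rw [hrow j hj] at hposj
  rw [hrow k hk, ← hdepth] at hposk
  have hxj := left_ne_zero_of_mul hposj.ne'
  have hxk := left_ne_zero_of_mul hposk.ne'
  have hopp : Real.sign ((A ^ p j *ᵥ B) k) = -Real.sign ((A ^ p j *ᵥ B) j) := by
    rw [(hnode k hk _ hxk).2, (hnode j hj _ hxj).2, hdil]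
    ring
  set c := if hd : p j < n then δ ⟨p j, hd⟩ else 0
  nlinarith [Real.mul_neg_of_sign_eq_neg hxj hopp, mul_pos hposj hposk, sq_nonneg c]

/-- **A directed tree with a layer dilation is not SS herdable (Prop. 3).**
`s` is a sign pattern (entries in `{−1,0,+1}`) whose pattern digraph is a
directed tree rooted at the leader (node `1`, index `⟨0, hn⟩`): every node
`j ≠ 1` is reached by exactly one walk from the leader, of length `p j ≥ 1`
and sign `σ j`, and no walk of positive length returns to the leader.  If two
distinct nodes `j, k ≠ 1` satisfy `p j = p k` and `σ j = −σ k` (layer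
dilation), then for every realization `A` of `s`, every `b ≠ 0`, and every
`δ`, the vector `𝒞(A, b·e₁) δ` is not entrywise strictly positive. -/
theorem tree_layer_dilation_not_SS_herdable
    (n : ℕ) (hn : 0 < n) (s : Matrix (Fin n) (Fin n) ℝ)
    (hsgnpat : ∀ i j, s i j = -1 ∨ s i j = 0 ∨ s i j = 1)
    (p : Fin n → ℕ) (σ : Fin n → ℝ)
    (hp : ∀ j, j ≠ ⟨0, hn⟩ → 1 ≤ p j)
    (hσ : ∀ j, σ j = 1 ∨ σ j = -1)
    (hex : ∀ j, j ≠ ⟨0, hn⟩ → ∃ v : ℕ → Fin n, isWalk n s (p j) v ⟨0, hn⟩ j)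
    (hall : ∀ j, j ≠ ⟨0, hn⟩ → ∀ (m : ℕ) (v : ℕ → Fin n),
      isWalk n s m v ⟨0, hn⟩ j → m = p j ∧ walkSign n s m v = σ j)
    (huniq : ∀ j, j ≠ ⟨0, hn⟩ → ∀ (m m' : ℕ) (v v' : ℕ → Fin n),
      isWalk n s m v ⟨0, hn⟩ j → isWalk n s m' v' ⟨0, hn⟩ j →
      m = m' ∧ ∀ t, t ≤ m → v t = v' t)
    (hroot : ∀ m : ℕ, 0 < m →
      ¬ ∃ v : ℕ → Fin n, isWalk n s m v ⟨0, hn⟩ ⟨0, hn⟩)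
    (j k : Fin n) (hj : j ≠ ⟨0, hn⟩) (hk : k ≠ ⟨0, hn⟩) (hjk : j ≠ k)
    (hdepth : p j = p k) (hdil : σ j = -σ k) :
    ∀ A : Matrix (Fin n) (Fin n) ℝ, (∀ i l, Real.sign (A i l) = s i l) →
      ∀ b : ℝ, b ≠ 0 → ∀ δ : Fin n → ℝ,
        ¬ ∀ i, 0 <
          (ctrbMatrix n A (fun l => if l = ⟨0, hn⟩ then b else 0)).mulVec δ i :=
  tree_layer_dilation_not_SS_herdable_general n hn s p σ hall huniq hroot j k hj hk hdepth hdil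
end

section
/- Consider the single-input LTI system with A ∈ ℝ^{n×n} and B = b·e₁ (b ≠ 0). Let i be a node and let S be a set of nodes with 1 ∉ S such that every j ∈ S has node i as its only in-neighbor, i.e. A_{j,l} = 0 for all l ≠ i and A_{j,i} ≠ 0. If there exist j, k ∈ S with A_{j,i} > 0 and A_{k,i} < 0 (a signed dilation at node i), then there is no δ ∈ ℝⁿ such that (𝒞(A,B)δ)_j > 0 for every j ∈ S. In particular, the nodes of a signed dilation set cannot all be herded simultaneously, regardless of how many walks of different lengths reach node i. -/
/-- **A signed dilation set cannot be herded jointly (Lemmas 4–5).**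
Single-input system with `B = b·e₁` (leader node `1`, index `⟨0, hn⟩`,
`b ≠ 0`). Let `S` be a set of nodes, not containing the leader, each of whose
members has node `i` as its only in-neighbor. If `S` contains a node attached
to `i` by a positive edge and one attached by a negative edge (signed
dilation at `i`), then no `δ` makes `(𝒞(A,B) δ)_j > 0` for every `j ∈ S`. -/
theorem signed_dilation_set_not_jointly_herdable
    (n : ℕ) (hn : 0 < n) (A : Matrix (Fin n) (Fin n) ℝ) (b : ℝ) (hb : b ≠ 0)
    (B : Fin n → ℝ) (hB : B = fun l => if l = ⟨0, hn⟩ then b else 0)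
    (i : Fin n) (S : Finset (Fin n)) (hS : (⟨0, hn⟩ : Fin n) ∉ S)
    (hin : ∀ j ∈ S, (∀ l, l ≠ i → A j l = 0) ∧ A j i ≠ 0)
    (hpos : ∃ j ∈ S, 0 < A j i) (hneg : ∃ k ∈ S, A k i < 0) :
    ¬ ∃ δ : Fin n → ℝ, ∀ j ∈ S, 0 < (ctrbMatrix n A B).mulVec δ j := by
  rintro ⟨δ, hδ⟩
  obtain ⟨j, hjS, hj⟩ := hpos
  obtain ⟨k, hkS, hk⟩ := hneg
  have key : ∀ p ∈ S, (ctrbMatrix n A B).mulVec δ p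
      = A p i * ∑ m : Fin n,
          (if (m : ℕ) = 0 then 0 else (A ^ ((m : ℕ) - 1)).mulVec B i) * δ m := by
    intro p hp
    have hrow := (hin p hp).1
    have hpne : p ≠ ⟨0, hn⟩ := fun h => hS (h ▸ hp)
    show (∑ m : Fin n, (A ^ (m : ℕ)).mulVec B p * δ m) = _
    rw [Finset.mul_sum]
    refine Finset.sum_congr rfl fun m _ => ?_
    rcases Nat.eq_zero_or_pos (m : ℕ) with h0 | hm
    · simp only [h0, pow_zero, if_pos rfl]
      have : (1 : Matrix (Fin n) (Fin n) ℝ).mulVec B p = B p := by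
        simp [Matrix.mulVec, dotProduct, Matrix.one_apply]
      rw [this, hB]
      simp [hpne]
    · obtain ⟨q, hq⟩ : ∃ q, (m : ℕ) = q + 1 := ⟨(m : ℕ) - 1, (Nat.succ_pred_eq_of_pos hm).symm⟩
      have h1 : (A ^ (m : ℕ)).mulVec B p = A p i * (A ^ q).mulVec B i := by
        rw [hq, pow_succ', ← Matrix.mulVec_mulVec]
        rw [show (A.mulVec ((A ^ q).mulVec B)) p
            = ∑ l, A p l * (A ^ q).mulVec B l from rfl]
        rw [Finset.sum_eq_single i]
        · intro l _ hl; rw [hrow l hl]; ring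
        · intro h; exact absurd (Finset.mem_univ i) h
      rw [h1, if_neg (by omega), hq]
      simp only [Nat.add_sub_cancel]
      ring
  set c := ∑ m : Fin n,
      (if (m : ℕ) = 0 then 0 else (A ^ ((m : ℕ) - 1)).mulVec B i) * δ m with hc
  have h1 : 0 < A j i * c := by rw [← key j hjS]; exact hδ j hjS
  have h2 : 0 < A k i * c := by rw [← key k hkS]; exact hδ k hkS
  nlinarith [mul_pos h1 h2, sq_nonneg c, mul_neg_of_pos_of_neg hj hk]
end
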